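/- Fix β > 0 and let m̄_L = Σ_{ℓ=1}^{L} S(L,ℓ) β^ℓ be the L-th moment of a Poisson distribution with mean β, where S(L,ℓ) is the Stirling number of the second kind. Then the sequence (m̄_L)_{L≥1} satisfies the Carleman condition: Σ_{k ≥ 1} m̄_{2k}^{−1/(2k)} = ∞. In particular, one has the bound m̄_{2k}^{1/(2k)} < (1+β)(1+2k) for every k ≥ 1. -/
import Mathlib


/-- Stirling numbers of the second kind. -/
def stirling2 : ℕ → ℕ → ℕ
  | 0, 0 => 1
  | 0, _ + 1 => 0
  | _ + 1, 0 => 0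
  | n + 1, k + 1 => (k + 1) * stirling2 n (k + 1) + stirling2 n k

/-- The `L`-th moment of a Poisson distribution with mean `β`:
`m̄_L = Σ_{ℓ=1}^L S(L,ℓ) β^ℓ` (the Bell polynomial of order `L` evaluated at `β`). -/
noncomputable def poissonMoment (β : ℝ) (L : ℕ) : ℝ :=
  ∑ ℓ ∈ Finset.Icc 1 L, (stirling2 L ℓ : ℝ) * β ^ ℓ

lemma stirling2_eq_zero : ∀ n k : ℕ, n < k → stirling2 n k = 0
  | 0, 0, h => absurd h (lt_irrefl 0)
  | 0, k + 1, _ => rfl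
  | n + 1, 0, h => absurd h (Nat.not_lt_zero _)
  | n + 1, k + 1, h => by
      have h1 : n < k + 1 := Nat.lt_of_succ_lt h
      have h2 : n < k := Nat.lt_of_succ_lt_succ h
      simp [stirling2, stirling2_eq_zero n (k+1) h1, stirling2_eq_zero n k h2]

lemma stirling2_le_factorial : ∀ n k : ℕ, stirling2 n k ≤ n.factorial
  | 0, 0 => le_refl 1
  | 0, k + 1 => Nat.zero_le _
  | n + 1, 0 => Nat.zero_le _
  | n + 1, k + 1 => by
      show (k + 1) * stirling2 n (k + 1) + stirling2 n k ≤ (n + 1).factorial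
      rcases le_or_gt (k + 1) n with hk | hk
      · calc (k + 1) * stirling2 n (k + 1) + stirling2 n k
            ≤ n * n.factorial + n.factorial :=
              Nat.add_le_add (Nat.mul_le_mul hk (stirling2_le_factorial n (k+1)))
                (stirling2_le_factorial n k)
          _ = (n + 1).factorial := by rw [Nat.factorial_succ]; ring
      · rw [stirling2_eq_zero n (k+1) hk, Nat.mul_zero, Nat.zero_add]
        exact le_trans (stirling2_le_factorial n k) (Nat.factorial_le (Nat.le_succ n))

lemma stirling2_one : ∀ n : ℕ, stirling2 (n + 1) 1 = 1
  | 0 => rfl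
  | n + 1 => by
      show 1 * stirling2 (n + 1) 1 + stirling2 (n + 1) 0 = 1
      rw [stirling2_one n]; rfl

lemma factorial_succ_le_pow : ∀ n : ℕ, (n + 1).factorial ≤ (n + 1) ^ n
  | 0 => le_refl 1
  | n + 1 => by
      calc (n + 2).factorial = (n + 2) * (n + 1).factorial := rfl
        _ ≤ (n + 2) * (n + 1) ^ n :=
            Nat.mul_le_mul_left _ (factorial_succ_le_pow n)
        _ ≤ (n + 2) * (n + 2) ^ n :=
            Nat.mul_le_mul_left _ (Nat.pow_le_pow_left (Nat.le_succ _) n)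
        _ = (n + 2) ^ (n + 1) := (pow_succ' _ _).symm

lemma poissonMoment_pos (β : ℝ) (hβ : 0 < β) (L : ℕ) (hL : 1 ≤ L) :
    0 < poissonMoment β L := by
  apply Finset.sum_pos'
  · intro i _
    positivity
  · refine ⟨1, Finset.mem_Icc.mpr ⟨le_refl 1, hL⟩, ?_⟩
    obtain ⟨m, rfl⟩ := Nat.exists_eq_add_of_le' hL
    rw [stirling2_one]
    simpa using hβ

lemma poissonMoment_lt (β : ℝ) (hβ : 0 < β) (L : ℕ) (hL : 1 ≤ L) :
    poissonMoment β L < ((1 + β) * (1 + L)) ^ L := by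
  have h1β : (1 : ℝ) ≤ 1 + β := by linarith
  have key : ∀ ℓ ∈ Finset.Icc 1 L,
      (stirling2 L ℓ : ℝ) * β ^ ℓ ≤ (L.factorial : ℝ) * (1 + β) ^ L := by
    intro ℓ hℓ
    rw [Finset.mem_Icc] at hℓ
    have hs : (stirling2 L ℓ : ℝ) ≤ (L.factorial : ℝ) := by
      exact_mod_cast stirling2_le_factorial L ℓ
    have hb : β ^ ℓ ≤ (1 + β) ^ L :=
      le_trans (pow_le_pow_left₀ hβ.le (by linarith) ℓ) (pow_le_pow_right₀ h1β hℓ.2)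
    exact mul_le_mul hs hb (by positivity) (by positivity)
  have hstrict : (stirling2 L 1 : ℝ) * β ^ 1 < (L.factorial : ℝ) * (1 + β) ^ L := by
    obtain ⟨m, rfl⟩ := Nat.exists_eq_add_of_le' hL
    rw [stirling2_one, Nat.cast_one]
    have h1 : β ^ 1 < (1 + β) ^ (m + 1) := by
      calc β ^ 1 = β := pow_one β
        _ < 1 + β := by linarith
        _ = (1 + β) ^ 1 := (pow_one _).symm
        _ ≤ (1 + β) ^ (m + 1) := pow_le_pow_right₀ h1β (Nat.le_add_left 1 m)
    have h2 : (1 : ℝ) ≤ ((m + 1).factorial : ℝ) := by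
      exact_mod_cast Nat.one_le_iff_ne_zero.mpr (Nat.factorial_ne_zero _)
    calc (1 : ℝ) * β ^ 1 = β ^ 1 := one_mul _
      _ < (1 + β) ^ (m + 1) := h1
      _ = 1 * (1 + β) ^ (m + 1) := (one_mul _).symm
      _ ≤ ((m + 1).factorial : ℝ) * (1 + β) ^ (m + 1) :=
          mul_le_mul_of_nonneg_right h2 (by positivity)
  have hsum : poissonMoment β L <
      ∑ _ℓ ∈ Finset.Icc 1 L, (L.factorial : ℝ) * (1 + β) ^ L := by
    apply Finset.sum_lt_sum key
    exact ⟨1, Finset.mem_Icc.mpr ⟨le_refl 1, hL⟩, hstrict⟩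
  have hcard : ∑ _ℓ ∈ Finset.Icc 1 L, (L.factorial : ℝ) * (1 + β) ^ L
      = (L : ℝ) * ((L.factorial : ℝ) * (1 + β) ^ L) := by
    rw [Finset.sum_const, Nat.card_Icc]
    simp [nsmul_eq_mul]
  have hfact : (L : ℝ) * (L.factorial : ℝ) ≤ ((1 + L : ℕ) : ℝ) ^ L := by
    have h1 : L * L.factorial ≤ (1 + L) ^ L := by
      calc L * L.factorial ≤ (L + 1) * L.factorial := Nat.mul_le_mul_right _ (Nat.le_succ L)
        _ = (L + 1).factorial := (Nat.factorial_succ L).symm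
        _ ≤ (L + 1) ^ L := factorial_succ_le_pow L
        _ = (1 + L) ^ L := by ring_nf
    exact_mod_cast h1
  calc poissonMoment β L < (L : ℝ) * ((L.factorial : ℝ) * (1 + β) ^ L) := hsum.trans_eq hcard
    _ = ((L : ℝ) * (L.factorial : ℝ)) * (1 + β) ^ L := by ring
    _ ≤ ((1 + L : ℕ) : ℝ) ^ L * (1 + β) ^ L :=
        mul_le_mul_of_nonneg_right hfact (by positivity)
    _ = ((1 + β) * (1 + L)) ^ L := by
        rw [← mul_pow]
        push_cast
        ring_nf

/-- Fix `β > 0`, and let `m̄_L` be the `L`-th Poisson(β) moment.  Then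
`m̄_{2k}^{1/(2k)} < (1+β)(1+2k)` for every `k ≥ 1`, and the moment sequence satisfies the
Carleman condition `Σ_{k≥1} m̄_{2k}^{−1/(2k)} = ∞` (the partial sums tend to infinity). -/
theorem poisson_moments_carleman (β : ℝ) (hβ : 0 < β) :
    (∀ k : ℕ, 1 ≤ k →
      (poissonMoment β (2 * k)) ^ ((1 : ℝ) / (2 * k)) < (1 + β) * (1 + 2 * k)) ∧
    Filter.Tendsto
      (fun n : ℕ => ∑ k ∈ Finset.Icc 1 n, (poissonMoment β (2 * k)) ^ (-(1 : ℝ) / (2 * k)))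
      Filter.atTop Filter.atTop := by
  have main : ∀ k : ℕ, 1 ≤ k →
      (poissonMoment β (2 * k)) ^ ((1 : ℝ) / (2 * k)) < (1 + β) * (1 + 2 * k) := by
    intro k hk
    have hL : 1 ≤ 2 * k := by omega
    set L := 2 * k with hLdef
    have hLpos : (0 : ℝ) < (L : ℝ) := by exact_mod_cast Nat.pos_of_ne_zero (by omega)
    have hm := poissonMoment_pos β hβ L hL
    have hlt := poissonMoment_lt β hβ L hL
    have hA : (0 : ℝ) < (1 + β) * (1 + L) := by positivity
    have h1 : (poissonMoment β L) ^ ((1 : ℝ) / L) <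
        (((1 + β) * (1 + L)) ^ L) ^ ((1 : ℝ) / L) :=
      Real.rpow_lt_rpow hm.le hlt (by positivity)
    have h2 : (((1 + β) * (1 + L)) ^ L : ℝ) ^ ((1 : ℝ) / L) = (1 + β) * (1 + L) := by
      rw [← Real.rpow_natCast ((1 + β) * (1 + L)) L, ← Real.rpow_mul hA.le]
      rw [mul_one_div, div_self (ne_of_gt hLpos), Real.rpow_one]
    have h3 : (poissonMoment β L) ^ ((1 : ℝ) / L) < (1 + β) * (1 + L) := h2 ▸ h1
    rw [hLdef] at h3
    push_cast at h3 ⊢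
    convert h3 using 4
  refine ⟨main, ?_⟩
  -- comparison with the harmonic series
  set c : ℝ := ((1 + β) * 3)⁻¹ with hc
  have hcpos : 0 < c := by positivity
  have hbound : ∀ k : ℕ, 1 ≤ k →
      c * (1 / (k : ℝ)) ≤ (poissonMoment β (2 * k)) ^ (-(1 : ℝ) / (2 * k)) := by
    intro k hk
    have hkpos : (0 : ℝ) < (k : ℝ) := by exact_mod_cast hk
    have hL : 1 ≤ 2 * k := by omega
    have hm := poissonMoment_pos β hβ (2 * k) hL
    have hrpos : (0 : ℝ) < (poissonMoment β (2 * k)) ^ ((1 : ℝ) / (2 * k)) :=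
      Real.rpow_pos_of_pos hm _
    have h1 := main k hk
    have hA : (0 : ℝ) < (1 + β) * (1 + 2 * k) := by positivity
    have hneg : (poissonMoment β (2 * k)) ^ (-(1 : ℝ) / (2 * k)) =
        ((poissonMoment β (2 * k)) ^ ((1 : ℝ) / (2 * k)))⁻¹ := by
      rw [neg_div, Real.rpow_neg hm.le]
    rw [hneg]
    have hstep : ((1 + β) * (1 + 2 * k))⁻¹ ≤
        ((poissonMoment β (2 * k)) ^ ((1 : ℝ) / (2 * k)))⁻¹ :=
      inv_anti₀ hrpos h1.le
    refine le_trans ?_ hstep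
    have h3k : (1 : ℝ) + 2 * k ≤ 3 * k := by
      have : (1 : ℝ) ≤ k := by exact_mod_cast hk
      linarith
    have hle : (1 + β) * (1 + 2 * (k:ℝ)) ≤ (1 + β) * 3 * k := by
      calc (1 + β) * (1 + 2 * (k:ℝ)) ≤ (1 + β) * (3 * k) :=
            mul_le_mul_of_nonneg_left h3k (by linarith)
        _ = (1 + β) * 3 * k := by ring
    calc c * (1 / (k:ℝ)) = ((1 + β) * 3 * k)⁻¹ := by
          rw [hc]; field_simp
      _ ≤ ((1 + β) * (1 + 2 * (k:ℝ)))⁻¹ := inv_anti₀ hA hle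
  have hharm : Filter.Tendsto
      (fun n : ℕ => ∑ k ∈ Finset.Icc 1 n, c * (1 / (k : ℝ)))
      Filter.atTop Filter.atTop := by
    have heq : ∀ n : ℕ, ∑ k ∈ Finset.Icc 1 n, c * (1 / (k : ℝ)) =
        c * ∑ i ∈ Finset.range n, (1 / ((i : ℝ) + 1)) := by
      intro n
      rw [← Finset.mul_sum]
      congr 1
      rw [show Finset.Icc 1 n = Finset.Ico 1 (n + 1) by rfl,
        Finset.sum_Ico_eq_sum_range]
      simp only [Nat.add_sub_cancel]
      apply Finset.sum_congr rfl
      intro i _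
      push_cast
      ring_nf
    simp only [heq]
    exact (Real.tendsto_sum_range_one_div_nat_succ_atTop).const_mul_atTop hcpos
  apply Filter.tendsto_atTop_mono _ hharm
  intro n
  apply Finset.sum_le_sum
  intro k hk
  exact hbound k (Finset.mem_Icc.mp hk).1
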